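/- arXiv:2312.13840 — 5 statements merged into one kernel-verified Lean document; each statement's English description precedes it below -/
import Mathlib

section
/- Let A, B, C be real numbers with A ≠ 0 and C² − 4AB > 0, and set p₁ = (−C + √(C² − 4AB))/(2A). Then for all (x,y,z) ∈ ℝ³, G_{A,B,C}(x − A·p₁, y + p₁, z − p₁) = F_{a,b,c}(x,y,z), where a = A, b = −p₁ and c = C + A·p₁. That is, the translation (x,y,z) ↦ (x − A·p₁, y + p₁, z − p₁) is a change of coordinates carrying the vector field F_{a,b,c} to the vector field G_{A,B,C}. -/
/-- The Rössler vector field with parameters `(a, b, c)`: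
`F_{a,b,c}(x,y,z) = (−y − z, x + ay, bx + z(x − c))`. -/
def rossler (a b c : ℝ) : ℝ × ℝ × ℝ → ℝ × ℝ × ℝ :=
  fun p => (-p.2.1 - p.2.2, p.1 + a * p.2.1, b * p.1 + p.2.2 * (p.1 - c))

/-- The original Rössler vector field with parameters `(A, B, C)`:
`G_{A,B,C}(X,Y,Z) = (−Y − Z, X + AY, B + Z(X − C))`. -/
def rosslerOrig (A B C : ℝ) : ℝ × ℝ × ℝ → ℝ × ℝ × ℝ :=
  fun p => (-p.2.1 - p.2.2, p.1 + A * p.2.1, B + p.2.2 * (p.1 - C))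

/-- The third components of the two sides differ by exactly `A p² + C p + B`. -/
theorem rosslerOrig_translate_eq_rossler {A B C p : ℝ} (hp : A * (p * p) + C * p + B = 0)
    (x y z : ℝ) :
    rosslerOrig A B C (x - A * p, y + p, z - p) = rossler A (-p) (C + A * p) (x, y, z) := by
  simp only [rossler, rosslerOrig, Prod.mk.injEq]
  refine ⟨by ring, by ring, ?_⟩
  linear_combination hp

/-- The translation `(x,y,z) ↦ (x − A·p₁, y + p₁, z − p₁)`, with
`p₁ = (−C + √(C² − 4AB))/(2A)`, carries the vector field `F_{a,b,c}` (with `a = A`,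
`b = −p₁`, `c = C + A·p₁`) to the vector field `G_{A,B,C}`. -/
theorem rossler_change_of_coordinates (A B C : ℝ) (hA : A ≠ 0)
    (hdisc : C ^ 2 - 4 * A * B > 0) :
    ∀ x y z : ℝ,
      rosslerOrig A B C
          (x - A * ((-C + Real.sqrt (C ^ 2 - 4 * A * B)) / (2 * A)),
            y + (-C + Real.sqrt (C ^ 2 - 4 * A * B)) / (2 * A),
            z - (-C + Real.sqrt (C ^ 2 - 4 * A * B)) / (2 * A)) =
        rossler A (-((-C + Real.sqrt (C ^ 2 - 4 * A * B)) / (2 * A)))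
          (C + A * ((-C + Real.sqrt (C ^ 2 - 4 * A * B)) / (2 * A))) (x, y, z) := by
  intro x y z
  have hroot : discrim A C B = √(discrim A C B) * √(discrim A C B) :=
    (Real.mul_self_sqrt (le_of_lt hdisc)).symm
  exact rosslerOrig_translate_eq_rossler
    ((quadratic_eq_zero_iff hA hroot _).2 (Or.inl rfl)) x y z
end

section
/- Let a, b, c be real numbers with a > 0, and let N = (1, a, 0). For every point s = (x, −x/a, z) with z > x/a one has F_{a,b,c}(s) • N < 0, and for every point s = (x, −x/a, z) with z < x/a one has F_{a,b,c}(s) • N > 0. In particular the vector field F_{a,b,c} is transverse to both open half-planes U = {(x, −x/a, z) : z > x/a} and L = {(x, −x/a, z) : z < x/a}. -/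
/-- The Euclidean inner product on `ℝ³`. -/
def dot3 (u v : ℝ × ℝ × ℝ) : ℝ :=
  u.1 * v.1 + u.2.1 * v.2.1 + u.2.2 * v.2.2

theorem dot3_rossler_normal_of_mem_plane (b c : ℝ) {a : ℝ} (ha : a ≠ 0) (x z : ℝ) :
    dot3 (rossler a b c (x, -x / a, z)) (1, a, 0) = x / a - z := by
  simp only [dot3, rossler]
  field_simp
  ring

/-- The Rössler vector field is transverse to the two open half-planes
`U = {(x, −x/a, z) : z > x/a}` and `L = {(x, −x/a, z) : z < x/a}`: its inner product with
`N = (1, a, 0)` is negative on `U` and positive on `L`. -/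
theorem rossler_transverse_halfplanes (a b c : ℝ) (ha : 0 < a) :
    (∀ x z : ℝ, x / a < z → dot3 (rossler a b c (x, -x / a, z)) (1, a, 0) < 0) ∧
    (∀ x z : ℝ, z < x / a → 0 < dot3 (rossler a b c (x, -x / a, z)) (1, a, 0)) := by
  refine ⟨fun x z hz => ?_, fun x z hz => ?_⟩ <;>
    rw [dot3_rossler_normal_of_mem_plane b c ha.ne' x z] <;> linarith
end

section
/- Let a, b ∈ (0,1) and c > 1. Define the three surfaces R₁ = {(x, −x/a, z) : −x/a > b+1, z < x/a}, R₂ = {(x, −z, z) : x − az < 0, z ≤ −(b+1)}, R₃ = {(x, b+1, z) : −z − (b+1) ≥ 0, x + a(b+1) < 0}, with respective outward normal vectors r₁ = (1, a, 0), r₂ = (0, 1, 1), r₃ = (0, −1, 0). Then for every i ∈ {1,2,3} and every point v ∈ Rᵢ, F_{a,b,c}(v) • rᵢ > 0; that is, the vector field F_{a,b,c} points strictly outward along all three boundary surfaces of the region R = {(x,y,z) : x + ay < 0, −y − z > 0, y > b+1}. -/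
section Faces

variable {a b c : ℝ}

theorem dot3_rossler_face₁ (ha : a ≠ 0) (x z : ℝ) :
    dot3 (rossler a b c (x, -x / a, z)) (1, a, 0) = x / a - z := by
  simp only [rossler, dot3]
  field_simp
  ring

theorem dot3_rossler_face₂ (x z : ℝ) :
    dot3 (rossler a b c (x, -z, z)) (0, 1, 1) = x * (1 + b + z) - z * (a + c) := by
  simp only [rossler, dot3]
  ring

theorem dot3_rossler_face₃ (x y z : ℝ) :
    dot3 (rossler a b c (x, y, z)) (0, -1, 0) = -(x + a * y) := by
  simp only [rossler, dot3]
  ring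

theorem rossler_outward_face₁ (ha : a ≠ 0) {x z : ℝ} (hz : z < x / a) :
    0 < dot3 (rossler a b c (x, -x / a, z)) (1, a, 0) := by
  rw [dot3_rossler_face₁ ha]
  exact sub_pos.2 hz

theorem rossler_outward_face₂ (ha : 0 < a) (hb : -1 < b) (hac : 0 < a + c) {x z : ℝ}
    (hx : x - a * z < 0) (hz : z ≤ -(b + 1)) :
    0 < dot3 (rossler a b c (x, -z, z)) (0, 1, 1) := by
  have hz_neg : z < 0 := by linarith
  have hx_neg : x < 0 := by linarith [mul_neg_of_pos_of_neg ha hz_neg]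
  have h_prod : 0 ≤ x * (1 + b + z) := mul_nonneg_of_nonpos_of_nonpos hx_neg.le (by linarith)
  have h_lin : 0 < -z * (a + c) := mul_pos (neg_pos.2 hz_neg) hac
  rw [dot3_rossler_face₂]
  linarith

theorem rossler_outward_face₃ {x y z : ℝ} (h : x + a * y < 0) :
    0 < dot3 (rossler a b c (x, y, z)) (0, -1, 0) := by
  rw [dot3_rossler_face₃]
  exact neg_pos.2 h

end Faces

/-- For `a, b ∈ (0,1)`, `c > 1`, the Rössler vector field points strictly outward (positive
inner product with the respective outward normals `r₁ = (1,a,0)`, `r₂ = (0,1,1)`,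
`r₃ = (0,−1,0)`) along the three boundary surfaces
`R₁ = {(x, −x/a, z) : −x/a > b+1, z < x/a}`,
`R₂ = {(x, −z, z) : x − az < 0, z ≤ −(b+1)}`,
`R₃ = {(x, b+1, z) : −z − (b+1) ≥ 0, x + a(b+1) < 0}` of the region
`R = {x + ay < 0, −y − z > 0, y > b+1}`. -/
theorem rossler_outward_on_R (a b c : ℝ) (ha : a ∈ Set.Ioo (0 : ℝ) 1)
    (hb : b ∈ Set.Ioo (0 : ℝ) 1) (hc : 1 < c) :
    (∀ x z : ℝ, b + 1 < -x / a → z < x / a →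
      0 < dot3 (rossler a b c (x, -x / a, z)) (1, a, 0)) ∧
    (∀ x z : ℝ, x - a * z < 0 → z ≤ -(b + 1) →
      0 < dot3 (rossler a b c (x, -z, z)) (0, 1, 1)) ∧
    (∀ x z : ℝ, 0 ≤ -z - (b + 1) → x + a * (b + 1) < 0 →
      0 < dot3 (rossler a b c (x, b + 1, z)) (0, -1, 0)) :=
  ⟨fun _ _ _ hz => rossler_outward_face₁ ha.1.ne' hz,
    fun _ _ hx hz => rossler_outward_face₂ ha.1 (by linarith [hb.1]) (by linarith [ha.1]) hx hz,
    fun _ _ _ h => rossler_outward_face₃ h⟩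
end

section
/- Let c ∈ [−2, 1/4] and set x₁ = (1 + √(1 − 4c))/2. Then for every x ∈ ℝ with |x| > x₁, the iterates of x under p_c tend to infinity: p_cⁿ(x) → +∞ as n → ∞. -/
/-!
Above `x₁`, the larger root of `t² - t + c`, the map `y ↦ y² + c` moves every point to the right
by at least the gap `δ = t² + c - t > 0` measured at `t = |x|`. After one step the orbit of `x`
stays in `[|x|, ∞)`, so its `n`-th point is at least `|x| + n δ`.
-/

open Filter

section EscapeByUniformDrift

variable {f : ℝ → ℝ} {a δ : ℝ}

theorem add_mul_le_iterate_of_drift (hδ : 0 ≤ δ) (hf : ∀ y, a ≤ y → y + δ ≤ f y) {x : ℝ}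
    (hx : a ≤ x) (n : ℕ) : x + n * δ ≤ f^[n] x := by
  induction n with
  | zero => simp
  | succ n ih =>
    have h_mem : a ≤ f^[n] x := by nlinarith [(n.cast_nonneg : (0 : ℝ) ≤ n)]
    rw [Function.iterate_succ_apply']
    push_cast
    linarith [hf _ h_mem]

theorem tendsto_iterate_atTop_of_drift (hδ : 0 < δ) (hf : ∀ y, a ≤ y → y + δ ≤ f y) {x : ℝ}
    (hx : a ≤ x) : Tendsto (fun n : ℕ => f^[n] x) atTop atTop := by
  have h_lin : Tendsto (fun n : ℕ => x + n * δ) atTop atTop :=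
    tendsto_atTop_add_const_left _ x (tendsto_natCast_atTop_atTop.atTop_mul_const hδ)
  exact tendsto_atTop_mono (add_mul_le_iterate_of_drift hδ.le hf hx) h_lin

end EscapeByUniformDrift

theorem sq_sub_self_add_pos_of_gt {c t : ℝ} (ht : (1 + Real.sqrt (1 - 4 * c)) / 2 < t) :
    0 < t ^ 2 - t + c := by
  have h_pos : 0 < 2 * t - 1 := by linarith [Real.sqrt_nonneg (1 - 4 * c)]
  have h_sq : 1 - 4 * c < (2 * t - 1) ^ 2 := (Real.sqrt_lt' h_pos).1 (by linarith)
  nlinarith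

theorem quadratic_escape_to_infinity_general (c : ℝ) :
    ∀ x : ℝ, (1 + Real.sqrt (1 - 4 * c)) / 2 < |x| →
      Filter.Tendsto (fun n : ℕ => (fun y : ℝ => y ^ 2 + c)^[n] x)
        Filter.atTop Filter.atTop := by
  intro x hx
  set t := |x|
  have h_gap := sq_sub_self_add_pos_of_gt hx
  have h_half : 1 / 2 < t := by linarith [Real.sqrt_nonneg (1 - 4 * c)]
  have h_drift : ∀ y, t ≤ y → y + (t ^ 2 + c - t) ≤ y ^ 2 + c := fun y hy => by nlinarith
  have h_first : t ≤ x ^ 2 + c := by nlinarith [sq_abs x]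
  rw [← tendsto_add_atTop_iff_nat 1]
  simpa only [Function.iterate_succ_apply] using
    tendsto_iterate_atTop_of_drift (by linarith) h_drift h_first

/-- For `c ∈ [−2, 1/4]` and `x₁ = (1 + √(1 − 4c))/2`, every point `x` with `|x| > x₁`
escapes to `+∞` under iteration of `p_c(x) = x² + c`. -/
theorem quadratic_escape_to_infinity (c : ℝ) (hc : c ∈ Set.Icc (-2 : ℝ) (1 / 4)) :
    ∀ x : ℝ, (1 + Real.sqrt (1 - 4 * c)) / 2 < |x| →
      Filter.Tendsto (fun n : ℕ => (fun y : ℝ => y ^ 2 + c)^[n] x)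
        Filter.atTop Filter.atTop :=
  quadratic_escape_to_infinity_general c
end

section
/- Let c ∈ [−2, 1/4] and set x₁ = (1 + √(1 − 4c))/2. Then the forward orbit of the critical point 0 under p_c is bounded; more precisely, p_cⁿ(0) ∈ [−x₁, x₁] for every n ≥ 0. -/
open Set

-- On `[-a, a]` the values `x² + c` lie in `[c, a² + c] = [c, a]`.
theorem mapsTo_Icc_neg_self_of_sq_add_eq_self {a c : ℝ} (hfix : a ^ 2 + c = a) (hc : -a ≤ c) :
    MapsTo (fun y : ℝ => y ^ 2 + c) (Icc (-a) a) (Icc (-a) a) := by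
  intro x ⟨hxl, hxr⟩
  have hsq : x ^ 2 ≤ a ^ 2 := sq_le_sq' hxl hxr
  exact ⟨by nlinarith [sq_nonneg x], by linarith⟩

/-- The paper's `x₁`: the larger fixed point of `y ↦ y² + c` when `c ≤ 1/4`. -/
noncomputable def quadraticFixedPoint (c : ℝ) : ℝ := (1 + √(1 - 4 * c)) / 2

theorem quadraticFixedPoint_nonneg (c : ℝ) : 0 ≤ quadraticFixedPoint c := by
  unfold quadraticFixedPoint
  positivity

theorem quadraticFixedPoint_sq_add {c : ℝ} (hc : c ≤ 1 / 4) :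
    quadraticFixedPoint c ^ 2 + c = quadraticFixedPoint c := by
  have hs : √(1 - 4 * c) ^ 2 = 1 - 4 * c := Real.sq_sqrt (by linarith)
  unfold quadraticFixedPoint
  linear_combination hs / 4

theorem neg_quadraticFixedPoint_le {c : ℝ} (hc : -2 ≤ c) : -quadraticFixedPoint c ≤ c := by
  suffices -1 - 2 * c ≤ √(1 - 4 * c) by unfold quadraticFixedPoint; linarith
  rcases le_or_gt (-1 - 2 * c) 0 with hneg | hpos
  · exact hneg.trans (Real.sqrt_nonneg _)
  · -- `(1 - 4c) - (1 + 2c)² = -4c(c + 2) ≥ 0` on `[-2, -1/2]`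
    exact Real.le_sqrt_of_sq_le (by nlinarith)

/-- For `c ∈ [−2, 1/4]` and `x₁ = (1 + √(1 − 4c))/2`, the forward orbit of the critical
point `0` under `p_c(x) = x² + c` remains in `[−x₁, x₁]` for all `n ≥ 0`. -/
theorem quadratic_critical_orbit_bounded (c : ℝ) (hc : c ∈ Set.Icc (-2 : ℝ) (1 / 4)) :
    ∀ n : ℕ, (fun y : ℝ => y ^ 2 + c)^[n] 0 ∈
      Set.Icc (-((1 + Real.sqrt (1 - 4 * c)) / 2)) ((1 + Real.sqrt (1 - 4 * c)) / 2) := by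
  intro n
  have hinv := mapsTo_Icc_neg_self_of_sq_add_eq_self (quadraticFixedPoint_sq_add hc.2)
    (neg_quadraticFixedPoint_le hc.1)
  have hx₁ := quadraticFixedPoint_nonneg c
  exact hinv.iterate n ⟨neg_nonpos.2 hx₁, hx₁⟩
end
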